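/- arXiv:1703.00532 — 2 statements merged into one kernel-verified Lean document; each statement's English description precedes it below -/
import Mathlib

section
/- Let M_j > 0 for j ∈ G and consider the swing dynamics M_j ω̇_j = −p_j^L + s_j − d_j^u − Σ_{k:j→k} p_{jk} + Σ_{i:i→j} p_{ij} for j ∈ G, with 0 = −p_j^L + s_j − d_j^u − Σ_{k:j→k} p_{jk} + Σ_{i:i→j} p_{ij} for j ∈ L, and equilibrium (ω*, s*, d^{u,*}, p*) with ω*_i = ω*_j for all edges. Then V_F(ω) = ½ Σ_{j∈G} M_j(ω_j − ω*_j)² satisfies V̇_F = Σ_{j∈N} [(ω_j − ω*_j)(s_j − s*_j) + (ω_j − ω*_j)(−d_j^u + d_j^{u,*})] + Σ_{(i,j)∈E} (p_{ij} − p*_{ij})(ω_j − ω_i) along trajectories. -/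
/-!
Along a trajectory, `d/dt ½ M_j (ω_j - ω*_j)² = (ω_j - ω*_j) P_j`, where `P_j` is the power
imbalance at bus `j`. At load buses `P_j = 0`, and at every bus the equilibrium imbalance vanishes,
so `V̇_F = Σ_j (ω_j - ω*_j)(P_j - P*_j)` over all buses. The supply and demand parts of
`P_j - P*_j` give the first sum; the line-flow part is summed by parts over the edges, where
`ω*` is constant along every edge.
-/

open Finset

section NetworkSums

variable {V E R : Type*} [Fintype V] [Fintype E] [DecidableEq V] [CommRing R]

def netInflow (src tgt : E → V) (q : E → R) (j : V) : R :=
  ∑ e ∈ univ.filter (fun e => tgt e = j), q e - ∑ e ∈ univ.filter (fun e => src e = j), q e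

omit [Fintype V] in
lemma netInflow_sub (src tgt : E → V) (q q' : E → R) (j : V) :
    netInflow src tgt (q - q') j = netInflow src tgt q j - netInflow src tgt q' j := by
  simp only [netInflow, Pi.sub_apply, sum_sub_distrib]
  ring

lemma sum_mul_comp_eq_sum_fiber_mul (f : E → V) (q : E → R) (x : V → R) :
    ∑ e, q e * x (f e) = ∑ j, (∑ e ∈ univ.filter (fun e => f e = j), q e) * x j := by
  rw [← sum_fiberwise univ f]
  refine sum_congr rfl fun j _ => ?_
  rw [sum_mul]
  exact sum_congr rfl fun e he => by rw [(mem_filter.mp he).2]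

lemma sum_mul_netInflow (src tgt : E → V) (q : E → R) (x : V → R) :
    ∑ j, x j * netInflow src tgt q j = ∑ e, q e * (x (tgt e) - x (src e)) := by
  simp only [mul_sub, sum_sub_distrib]
  rw [sum_mul_comp_eq_sum_fiber_mul tgt, sum_mul_comp_eq_sum_fiber_mul src, ← sum_sub_distrib]
  exact sum_congr rfl fun j _ => by rw [netInflow]; ring

end NetworkSums

lemma hasDerivAt_half_weighted_sum_sq {V : Type*} (G : Finset V) (M : V → ℝ)
    (hM : ∀ j ∈ G, M j ≠ 0) (ω : V → ℝ → ℝ) (ωstar F : V → ℝ) (t : ℝ)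
    (hω : ∀ j ∈ G, HasDerivAt (ω j) (F j / M j) t) :
    HasDerivAt (fun τ => (1 / 2) * ∑ j ∈ G, M j * (ω j τ - ωstar j) ^ 2)
      (∑ j ∈ G, (ω j t - ωstar j) * F j) t := by
  have hsum := (HasDerivAt.fun_sum fun j hj =>
    (((hω j hj).sub_const (ωstar j)).pow 2).const_mul (M j)).const_mul (1 / 2 : ℝ)
  refine hsum.congr_deriv ?_
  rw [mul_sum]
  refine sum_congr rfl fun j hj => ?_
  field_simp [hM j hj]
  ring

theorem stmt_8 {V E : Type} [Fintype V] [Fintype E] [DecidableEq V]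
    (src tgt : E → V) (Gset : Finset V)
    (M : V → ℝ) (hM : ∀ j ∈ Gset, 0 < M j)
    (pL : V → ℝ)
    (ω s du : V → ℝ → ℝ) (p : E → ℝ → ℝ)
    (ωstar sstar dustar : V → ℝ) (pstar : E → ℝ) (t : ℝ)
    -- swing dynamics at generation buses
    (hswing : ∀ j ∈ Gset, HasDerivAt (ω j)
      ((-pL j + s j t - du j t
        - (∑ e ∈ univ.filter (fun e => src e = j), p e t)
        + (∑ e ∈ univ.filter (fun e => tgt e = j), p e t)) / M j) t)
    -- algebraic equations at load buses
    (hload : ∀ j ∉ Gset, (0 : ℝ) = -pL j + s j t - du j t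
        - (∑ e ∈ univ.filter (fun e => src e = j), p e t)
        + (∑ e ∈ univ.filter (fun e => tgt e = j), p e t))
    -- equilibrium relations
    (heq : ∀ j : V, (0 : ℝ) = -pL j + sstar j - dustar j
        - (∑ e ∈ univ.filter (fun e => src e = j), pstar e)
        + (∑ e ∈ univ.filter (fun e => tgt e = j), pstar e))
    (hωeq : ∀ e : E, ωstar (src e) = ωstar (tgt e)) :
    HasDerivAt (fun τ => (1/2) * ∑ j ∈ Gset, M j * (ω j τ - ωstar j)^2)
      ((∑ j, ((ω j t - ωstar j) * (s j t - sstar j)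
            + (ω j t - ωstar j) * (-(du j t) - (-(dustar j)))))
        + ∑ e, (p e t - pstar e) * (ω (tgt e) t - ω (src e) t)) t := by
  set P : V → ℝ := fun j => -pL j + s j t - du j t + netInflow src tgt (p · t) j
  have hderiv : HasDerivAt (fun τ => (1/2) * ∑ j ∈ Gset, M j * (ω j τ - ωstar j)^2)
      (∑ j ∈ Gset, (ω j t - ωstar j) * P j) t :=
    hasDerivAt_half_weighted_sum_sq Gset M (fun j hj => (hM j hj).ne') ω ωstar P t
      fun j hj => by convert hswing j hj using 2; unfold P netInflow; ring
  have hP_load : ∀ j ∉ Gset, P j = 0 := fun j hj => by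
    unfold P netInflow; linear_combination -hload j hj
  have hP_deviation : ∀ j, P j = (s j t - sstar j) + (-(du j t) - -(dustar j))
      + netInflow src tgt ((p · t) - pstar) j := fun j => by
    unfold P; rw [netInflow_sub]; unfold netInflow; linear_combination -heq j
  rw [sum_subset (subset_univ Gset) fun j _ hj => by rw [hP_load j hj, mul_zero]] at hderiv
  simp only [hP_deviation, mul_add, sum_add_distrib, sum_mul_netInflow] at hderiv ⊢
  convert hderiv using 2
  refine sum_congr rfl fun e _ => ?_
  rw [Pi.sub_apply, hωeq e]
  ring
end

section
/- Let V_b(b, χ, ω) = ½ Σ_{j∈G} [ M_j((b_j − b*_j) − (ω_j − ω*_j))² + τ_j(χ_j − χ*_j)² ] with M_j, τ_j > 0, where trajectories satisfy τ_j χ̇_j = b_j − ω_j − p_j^c − χ_j, M_j ḃ_j = −χ_j + w_j, M_j ω̇_j = −p_j^L + w_j, and equilibria satisfy χ*_j = w*_j = p_j^L, b*_j = ω*_j + p_j^{c,*} + χ*_j. Then V̇_b = Σ_{j∈G} ( −(χ_j − χ*_j)[(p_j^c − p_j^{c,*}) + (χ_j − χ*_j)] ) along trajectories. -/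
/-!
Per node, the unknown power imbalance `w` enters `ḃ` and `ω̇` with the same coefficient `1 / M`,
so it cancels in `d/dt (b - ω) = (pL - χ) / M`. With `χ* = pL` and `b* - ω* = pc* + χ*`, the
cross terms of the two quadratic parts then cancel, leaving `-(χ - χ*)((pc - pc*) + (χ - χ*))`.
-/

theorem hasDerivAt_observer_storage {M τ pL bstar χstar ωstar pcstar : ℝ}
    {b χ ω : ℝ → ℝ} {pc w : ℝ} {t : ℝ} (hM : M ≠ 0) (hτ : τ ≠ 0)
    (hχdot : HasDerivAt χ ((b t - ω t - pc - χ t) / τ) t)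
    (hbdot : HasDerivAt b ((-χ t + w) / M) t)
    (hωdot : HasDerivAt ω ((-pL + w) / M) t)
    (hχstar : χstar = pL) (hbstar : bstar = ωstar + pcstar + χstar) :
    HasDerivAt (fun s => M * ((b s - bstar) - (ω s - ωstar)) ^ 2 + τ * (χ s - χstar) ^ 2)
      (2 * (-(χ t - χstar) * ((pc - pcstar) + (χ t - χstar)))) t := by
  have hgap : HasDerivAt (fun s => (b s - bstar) - (ω s - ωstar)) ((pL - χ t) / M) t :=
    ((hbdot.sub_const bstar).sub (hωdot.sub_const ωstar)).congr_deriv (by ring)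
  refine (((hgap.pow 2).const_mul M).add
    (((hχdot.sub_const χstar).pow 2).const_mul τ)).congr_deriv ?_
  subst hχstar hbstar
  field_simp
  ring

theorem stmt_18 {G : Type} [Fintype G]
    (M τ : G → ℝ) (hM : ∀ j, 0 < M j) (hτ : ∀ j, 0 < τ j)
    (pL : G → ℝ)
    (b χ ω pc w : G → ℝ → ℝ)
    (bstar χstar ωstar pcstar : G → ℝ) (t : ℝ)
    -- observer and swing dynamics
    (hχdot : ∀ j, HasDerivAt (χ j) ((b j t - ω j t - pc j t - χ j t) / τ j) t)
    (hbdot : ∀ j, HasDerivAt (b j) ((-χ j t + w j t) / M j) t)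
    (hωdot : ∀ j, HasDerivAt (ω j) ((-pL j + w j t) / M j) t)
    -- equilibrium relations
    (hχstar : ∀ j, χstar j = pL j)
    (hbstar : ∀ j, bstar j = ωstar j + pcstar j + χstar j) :
    HasDerivAt (fun s => (1/2) * ∑ j,
        (M j * ((b j s - bstar j) - (ω j s - ωstar j))^2
          + τ j * (χ j s - χstar j)^2))
      (∑ j, (-(χ j t - χstar j) * ((pc j t - pcstar j) + (χ j t - χstar j)))) t := by
  have hnode := fun j => hasDerivAt_observer_storage (hM j).ne' (hτ j).ne'
    (hχdot j) (hbdot j) (hωdot j) (hχstar j) (hbstar j)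
  refine ((HasDerivAt.fun_sum fun j _ => hnode j).const_mul (1 / 2 : ℝ)).congr_deriv ?_
  rw [Finset.mul_sum]
  exact Finset.sum_congr rfl fun j _ => by ring
end
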